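/- arXiv:1506.06538 — 3 statements merged into one kernel-verified Lean document; each statement's English description precedes it below -/
import Mathlib

section
/- Fix m ≥ 1 and c ≥ 0, and define c_0 = 0, c_1 = 1, c_n = min{ k < n : m·k + c_k ≥ n } for n ≥ 2. Then this sequence is well-defined (the minimized set is nonempty for each n ≥ 2) and satisfies c_{n+1} ∈ {c_n, c_n + 1} for all n ≥ 1. -/
/-!
Once `c` is known to be positive, `n - 1` is a candidate for `c n`, so every minimum exists.
A candidate `k < n` for `n + 1` is also a candidate for `n`, which makes `c` monotone; and
monotonicity makes `c n + 1` a candidate for `n + 1`, since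
`m (c n + 1) + c (c n + 1) ≥ m c n + c (c n) + m ≥ n + 1`.
-/

/-- The sequence defined by `a 0 = 0`, `a 1 = 1`, and for `n ≥ 2`,
`a n = min { k < n : m * k + a k ≥ n }` (for `m = 1` this is the sequence `a` of the paper). -/
noncomputable def jseq (m : ℕ) (n : ℕ) : ℕ :=
  Nat.strongRecOn n (fun n ih =>
    if n = 0 then 0
    else if n = 1 then 1
    else sInf {k : ℕ | ∃ h : k < n, n ≤ m * k + ih k h})

def jseqCandidates (m n : ℕ) : Set ℕ := {k | k < n ∧ n ≤ m * k + jseq m k}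

section

variable {m n : ℕ}

theorem jseq_eq (m n : ℕ) :
    jseq m n = if n = 0 then 0 else if n = 1 then 1 else sInf (jseqCandidates m n) := by
  rw [jseq, Nat.strongRecOn_eq]
  simp only [exists_prop]
  rfl

@[simp]
theorem jseq_zero (m : ℕ) : jseq m 0 = 0 := by
  rw [jseq_eq, if_pos rfl]

@[simp]
theorem jseq_one (m : ℕ) : jseq m 1 = 1 := by
  rw [jseq_eq, if_neg one_ne_zero, if_pos rfl]

theorem jseq_of_two_le (hn : 2 ≤ n) : jseq m n = sInf (jseqCandidates m n) := by
  rw [jseq_eq, if_neg (by omega), if_neg (by omega)]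

theorem zero_notMem_jseqCandidates (hn : n ≠ 0) : 0 ∉ jseqCandidates m n := by
  rintro ⟨-, hle⟩
  simp only [mul_zero, jseq_zero, add_zero, nonpos_iff_eq_zero] at hle
  exact hn hle

theorem pred_mem_jseqCandidates (hm : 1 ≤ m) (hn : 2 ≤ n) (hpos : 1 ≤ jseq m (n - 1)) :
    n - 1 ∈ jseqCandidates m n := by
  have : n - 1 ≤ m * (n - 1) := Nat.le_mul_of_pos_left _ hm
  exact ⟨by omega, by omega⟩

theorem one_le_jseq (hm : 1 ≤ m) (hn : 1 ≤ n) : 1 ≤ jseq m n := by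
  induction n using Nat.strong_induction_on with
  | _ n ih =>
    obtain rfl | hn2 : n = 1 ∨ 2 ≤ n := by omega
    · simp
    have hne : (jseqCandidates m n).Nonempty :=
      ⟨n - 1, pred_mem_jseqCandidates hm hn2 (ih (n - 1) (by omega) (by omega))⟩
    rw [Nat.one_le_iff_ne_zero, jseq_of_two_le hn2]
    intro h
    exact zero_notMem_jseqCandidates (by omega) (h ▸ Nat.sInf_mem hne)

theorem jseqCandidates_nonempty (hm : 1 ≤ m) (hn : 2 ≤ n) : (jseqCandidates m n).Nonempty :=
  ⟨n - 1, pred_mem_jseqCandidates hm hn (one_le_jseq hm (by omega))⟩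

theorem jseq_mem_jseqCandidates (hm : 1 ≤ m) (hn : 2 ≤ n) : jseq m n ∈ jseqCandidates m n :=
  jseq_of_two_le hn ▸ Nat.sInf_mem (jseqCandidates_nonempty hm hn)

theorem jseq_le_of_mem_jseqCandidates {k : ℕ} (hn : 2 ≤ n) (hk : k ∈ jseqCandidates m n) :
    jseq m n ≤ k :=
  jseq_of_two_le hn ▸ Nat.sInf_le hk

theorem jseq_two (hm : 1 ≤ m) : jseq m 2 = 1 := by
  have hle : jseq m 2 ≤ 1 := jseq_le_of_mem_jseqCandidates le_rfl ⟨by omega, by rw [mul_one, jseq_one]; omega⟩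
  have := one_le_jseq hm (n := 2) (by omega)
  omega

theorem jseq_le_jseq_succ (hm : 1 ≤ m) (n : ℕ) : jseq m n ≤ jseq m (n + 1) := by
  obtain rfl | rfl | hn : n = 0 ∨ n = 1 ∨ 2 ≤ n := by omega
  · simp
  · rw [jseq_one, jseq_two hm]
  obtain ⟨-, hsucc⟩ := jseq_mem_jseqCandidates hm (n := n + 1) (by omega)
  by_cases hlt : jseq m (n + 1) < n
  · exact jseq_le_of_mem_jseqCandidates hn ⟨hlt, by omega⟩
  · have := (jseq_mem_jseqCandidates hm hn).1
    omega

theorem jseq_succ_le_jseq_add_one (hm : 1 ≤ m) (hn : 1 ≤ n) :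
    jseq m (n + 1) ≤ jseq m n + 1 := by
  obtain rfl | hn2 : n = 1 ∨ 2 ≤ n := by omega
  · simp [jseq_two hm]
  obtain ⟨hlt, hle⟩ := jseq_mem_jseqCandidates hm hn2
  have hmono := jseq_le_jseq_succ hm (jseq m n)
  refine jseq_le_of_mem_jseqCandidates (by omega) ⟨by omega, ?_⟩
  rw [Nat.mul_succ]
  omega

end

/-- For `m ≥ 1` the sequence `c` is well-defined (the minimized set is nonempty for
`n ≥ 2`) and satisfies `c (n+1) ∈ {c n, c n + 1}` for all `n ≥ 1`. -/
theorem jseq_general_well_defined_and_step (m : ℕ) (hm : 1 ≤ m) :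
    (∀ n : ℕ, 2 ≤ n → {k : ℕ | k < n ∧ n ≤ m * k + jseq m k}.Nonempty) ∧
      (∀ n : ℕ, 1 ≤ n → jseq m (n + 1) = jseq m n ∨ jseq m (n + 1) = jseq m n + 1) := by
  refine ⟨fun n hn => jseqCandidates_nonempty hm hn, fun n hn => ?_⟩
  have hmono := jseq_le_jseq_succ hm n
  have hstep := jseq_succ_le_jseq_add_one hm hn
  omega
end

section
/- For the finite Jaco graph J_ℓ(mx) with c = 0: if ℓ ≤ m + 1 then its underlying graph is the complete graph on ℓ vertices, and hence the number of arcs equals ℓ(ℓ−1)/2. -/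
/-- In-degree of vertex `j` in the infinite linear Jaco graph for `f x = m * x + c`:
`d⁻(v_j)` is the number of tails `1 ≤ i < j` with `f i + i - d⁻(v_i) ≥ j`
(stated subtraction-free as `j + d⁻(v_i) ≤ m * i + c + i`). -/
noncomputable def jacoIndeg (m c : ℕ) (j : ℕ) : ℕ :=
  Nat.strongRecOn j (fun j ih =>
    ((Finset.Ico 1 j).attach.filter (fun i =>
      j + ih i.1 (Finset.mem_Ico.mp i.2).2 ≤ m * i.1 + c + i.1)).card)

/-- `(v_i, v_j)` is an arc of the infinite Jaco graph `J_∞(mx + c)` iff `1 ≤ i < j` and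
`f(i) + i - d⁻(v_i) ≥ j`. -/
def JacoArc (m c i j : ℕ) : Prop :=
  1 ≤ i ∧ i < j ∧ j + jacoIndeg m c i ≤ m * i + c + i

noncomputable instance (m c i j : ℕ) : Decidable (JacoArc m c i j) := by
  unfold JacoArc; infer_instance

/-- Out-degree of `v_i` in the infinite Jaco graph `J_∞(mx + c)`. -/
noncomputable def jacoOutdegInf (m c i : ℕ) : ℕ := {j | JacoArc m c i j}.ncard

/-- Out-degree of `v_i` in the finite Jaco graph `J_n(mx + c)`. -/
noncomputable def jacoOutdeg (m c n i : ℕ) : ℕ :=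
  ((Finset.Icc 1 n).filter (fun j => JacoArc m c i j)).card

/-- Total degree of `v_i` in the underlying graph of `J_n(mx + c)`
(for `i ≤ n` the in-degree in `J_n` agrees with that in `J_∞`). -/
noncomputable def jacoDeg (m c n i : ℕ) : ℕ := jacoIndeg m c i + jacoOutdeg m c n i

/-- Number of arcs of the finite Jaco graph `J_n(mx + c)`. -/
noncomputable def jacoArcs (m c n : ℕ) : ℕ :=
  (((Finset.Icc 1 n) ×ˢ (Finset.Icc 1 n)).filter (fun p => JacoArc m c p.1 p.2)).card

open Finset

lemma jacoIndeg_le_pred (m c j : ℕ) : jacoIndeg m c j ≤ j - 1 := by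
  unfold jacoIndeg Nat.strongRecOn
  rw [WellFounded.fix_eq]
  calc _ ≤ #(Ico 1 j).attach := card_filter_le _ _
    _ = j - 1 := by simp

/-- Since `d⁻(v_i) ≤ i - 1`, the reach `m * i + i - d⁻(v_i)` of `v_i` is at least `m + 1`. -/
lemma jacoArc_of_le_succ {m c i j : ℕ} (hi : 1 ≤ i) (hij : i < j) (hj : j ≤ m + 1) :
    JacoArc m c i j := by
  refine ⟨hi, hij, ?_⟩
  have hindeg := jacoIndeg_le_pred m c i
  have hmi : m ≤ m * i := Nat.le_mul_of_pos_right m hi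
  omega

lemma jacoArcs_eq_choose_two {m c n : ℕ}
    (h : ∀ i j : ℕ, 1 ≤ i → i < j → j ≤ n → JacoArc m c i j) :
    jacoArcs m c n = n.choose 2 := by
  have hfilter : {p ∈ Icc 1 n ×ˢ Icc 1 n | JacoArc m c p.1 p.2}
      = {p ∈ Icc 1 n ×ˢ Icc 1 n | p.1 < p.2} := by
    refine filter_congr fun p hp => ⟨fun hp' => hp'.2.1, fun hlt => ?_⟩
    simp only [mem_product, mem_Icc] at hp
    exact h p.1 p.2 hp.1.1 hlt hp.2.2
  rw [jacoArcs, hfilter, card_product_filter_lt, Nat.card_Icc, Nat.add_sub_cancel]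

theorem jaco_arcs_complete_general (m ℓ : ℕ) (hℓ : ℓ ≤ m + 1) :
    (∀ i j : ℕ, 1 ≤ i → i < j → j ≤ ℓ → JacoArc m 0 i j) ∧
      jacoArcs m 0 ℓ = ℓ * (ℓ - 1) / 2 := by
  have hcomplete : ∀ i j : ℕ, 1 ≤ i → i < j → j ≤ ℓ → JacoArc m 0 i j :=
    fun _ _ hi hij hj => jacoArc_of_le_succ hi hij (hj.trans hℓ)
  exact ⟨hcomplete, (jacoArcs_eq_choose_two hcomplete).trans (Nat.choose_two_right ℓ)⟩

/-- For `ℓ ≤ m + 1`, the underlying graph of `J_ℓ(mx)` is complete, so it has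
`ℓ(ℓ-1)/2` arcs. -/
theorem jaco_arcs_complete (m ℓ : ℕ) (hm : 1 ≤ m) (hℓ : ℓ ≤ m + 1) :
    (∀ i j : ℕ, 1 ≤ i → i < j → j ≤ ℓ → JacoArc m 0 i j) ∧
      jacoArcs m 0 ℓ = ℓ * (ℓ - 1) / 2 :=
  jaco_arcs_complete_general m ℓ hℓ
end

section
/- In any finite linear Jaco graph J_n(f) with f(x) = mx + c (m ≥ 1, c ≥ 0) and n ≥ 2, consecutive vertices have total degrees (in the underlying undirected graph) differing by at most m: |d(v_i) − d(v_{i−1})| ≤ m for all 2 ≤ i ≤ n. -/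
/-!
Let `R(i) = f(i) + i - d⁻(v_i)` be the reach of `v_i`: the heads of the arcs leaving `v_i` are
exactly `v_{i+1}, …, v_{R(i)}`, so in `J_n(f)` we have `d⁺(v_i) = min(n, R(i)) - i`.
Every tail of `v_{j+1}` other than `v_j` is a tail of `v_j`, so `d⁻` grows by at most one per
step; hence `R(i+1) ≥ R(i) + m`, which lets `i ↦ i + 1` map the tails of `v_j` to tails of
`v_{j+1}`, so `d⁻` does not decrease either. Thus `Δd⁻ ∈ {0, 1}` and `ΔR = m + 1 - Δd⁻`, and
`d(v_{i+1}) - d(v_i) = Δd⁻ + Δmin(n, R) - 1` lies between `-1` and `m`.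
-/

section

variable (m c : ℕ)

theorem jacoIndeg_eq (j : ℕ) : jacoIndeg m c j
    = ((Finset.Ico 1 j).filter (fun i => j + jacoIndeg m c i ≤ m * i + c + i)).card := by
  conv_lhs => rw [jacoIndeg, Nat.strongRecOn.eq_1, WellFounded.fix_eq]
  refine Finset.card_bij (fun a _ => a.1) (fun a ha => ?_) (fun a _ b _ h => Subtype.ext h)
    (fun b hb => ?_)
  · exact Finset.mem_filter.mpr ⟨a.2, (Finset.mem_filter.mp ha).2⟩
  · obtain ⟨hb, harc⟩ := Finset.mem_filter.mp hb
    exact ⟨⟨b, hb⟩, Finset.mem_filter.mpr ⟨Finset.mem_attach _ _, harc⟩, rfl⟩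

theorem jacoIndeg_le (j : ℕ) : jacoIndeg m c j ≤ j - 1 := by
  rw [jacoIndeg_eq, ← Nat.card_Ico 1 j]
  exact Finset.card_filter_le _ _

noncomputable def jacoReach (i : ℕ) : ℕ := m * i + c + i - jacoIndeg m c i

theorem add_jacoIndeg_le_iff (i j : ℕ) :
    j + jacoIndeg m c i ≤ m * i + c + i ↔ j ≤ jacoReach m c i := by
  have := jacoIndeg_le m c i
  unfold jacoReach
  omega

theorem jacoArc_iff (i j : ℕ) : JacoArc m c i j ↔ 1 ≤ i ∧ i < j ∧ j ≤ jacoReach m c i := by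
  rw [JacoArc, add_jacoIndeg_le_iff]

theorem jacoIndeg_eq_card_reach (j : ℕ) :
    jacoIndeg m c j = ((Finset.Ico 1 j).filter (fun i => j ≤ jacoReach m c i)).card := by
  simp only [jacoIndeg_eq m c j, add_jacoIndeg_le_iff]

theorem jacoOutdeg_eq {i : ℕ} (hi : 1 ≤ i) (n : ℕ) :
    jacoOutdeg m c n i = min n (jacoReach m c i) - i := by
  rw [jacoOutdeg, ← Nat.card_Ioc]
  congr 1
  ext j
  simp only [Finset.mem_filter, Finset.mem_Icc, Finset.mem_Ioc, jacoArc_iff, le_min_iff]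
  omega

theorem jacoIndeg_succ_le (j : ℕ) : jacoIndeg m c (j + 1) ≤ jacoIndeg m c j + 1 := by
  rw [jacoIndeg_eq_card_reach m c (j + 1), jacoIndeg_eq_card_reach m c j]
  calc ((Finset.Ico 1 (j + 1)).filter (fun i => j + 1 ≤ jacoReach m c i)).card
      ≤ (insert j ((Finset.Ico 1 j).filter (fun i => j ≤ jacoReach m c i))).card := by
        refine Finset.card_le_card fun i => ?_
        simp only [Finset.mem_filter, Finset.mem_Ico, Finset.mem_insert]
        omega
    _ ≤ _ := Finset.card_insert_le _ _

theorem jacoReach_succ_add (j : ℕ) : jacoReach m c (j + 1) + jacoIndeg m c (j + 1)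
    = jacoReach m c j + jacoIndeg m c j + (m + 1) := by
  have := jacoIndeg_le m c j
  have := jacoIndeg_le m c (j + 1)
  unfold jacoReach
  rw [mul_add_one]
  omega

theorem jacoReach_add_le (j : ℕ) : jacoReach m c j + m ≤ jacoReach m c (j + 1) := by
  have := jacoReach_succ_add m c j
  have := jacoIndeg_succ_le m c j
  omega

variable {m}

theorem jacoIndeg_le_succ (hm : 1 ≤ m) (j : ℕ) : jacoIndeg m c j ≤ jacoIndeg m c (j + 1) := by
  rw [jacoIndeg_eq_card_reach m c j, jacoIndeg_eq_card_reach m c (j + 1)]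
  refine Finset.card_le_card_of_injOn (· + 1) (fun i hi => ?_) (fun a _ b _ h => by simpa using h)
  have := jacoReach_add_le m c i
  simp only [Finset.coe_filter, Finset.mem_Ico, Set.mem_ofPred_eq] at hi ⊢
  omega

end

theorem jaco_deg_consecutive_general (m c n i : ℕ) (hm : 1 ≤ m)
    (hi : 2 ≤ i) :
    |(jacoDeg m c n i : ℤ) - (jacoDeg m c n (i - 1) : ℤ)| ≤ (m : ℤ) := by
  obtain ⟨k, rfl⟩ : ∃ k, i = k + 1 := ⟨i - 1, by omega⟩
  have hmono := jacoIndeg_le_succ c hm k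
  have hstep := jacoIndeg_succ_le m c k
  have hreach := jacoReach_succ_add m c k
  rw [jacoDeg, jacoDeg, Nat.add_sub_cancel, jacoOutdeg_eq m c (by omega),
    jacoOutdeg_eq m c (by omega), abs_le]
  omega

/-- In `J_n(mx + c)` with `n ≥ 2`, consecutive vertices have total degrees differing
by at most `m`. -/
theorem jaco_deg_consecutive (m c n i : ℕ) (hm : 1 ≤ m) (hn : 2 ≤ n)
    (hi : 2 ≤ i) (hin : i ≤ n) :
    |(jacoDeg m c n i : ℤ) - (jacoDeg m c n (i - 1) : ℤ)| ≤ (m : ℤ) :=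
  jaco_deg_consecutive_general m c n i hm hi
end
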